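/- Let a and b be integers with 2 ≤ b < a, gcd(a, b) = 1, and d := a·b not a perfect square. Let T be the minimal period of the continued fraction of √d, (u_n), (v_n) the associated sequences, p_n/q_n the convergents of √d, and set N = T/2 when T is even. Then the equation a·x² − b·y² = 1 has a solution (x, y) ∈ ℕ² if and only if T ≡ 2 (mod 4), v_N = b, and v_N divides u_N; and in that case the set of solutions is exactly { (q_{N−1+ℓT}, p_{N−1+ℓT}/b) : ℓ ∈ ℕ } (each p_{N−1+ℓT} being divisible by b). -/

import Mathlib

/-!
For `n ≥ 1` the complete quotients of `√d` are `(u n + √d) / v n`, and the convergents satisfy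
`P (n+1)² - d Q (n+1)² = (-1)ⁿ v n`. A solution of `a x² - b y² = 1` gives `(b y)² - d x² = -b`
with `b < √d`, so by Legendre's theorem `b y / x` is a convergent `P (m+1) / Q (m+1)`; then `m`
is odd, `v m = b` and `b ∣ u m`, and conversely every such index yields a solution.
If `v m ∣ 2 u m` then `u (m+1) = u m`, and `(u, v)` is mirrored around `m`; this forces
`v (2m) = v 0 = 1`, i.e. `T ∣ 2m`. As `v m = b ≠ 1`, `T ∤ m`, so `T` is even and
`m ≡ T/2 (mod T)`.
-/

/-- The complete quotients of a real number `x`: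
`cq x 0 = x` and `cq x (n+1) = 1 / (cq x n - ⌊cq x n⌋)`. -/
noncomputable def cq (x : ℝ) : ℕ → ℝ
  | 0 => x
  | n + 1 => (Int.fract (cq x n))⁻¹

/-- The partial quotients of a real number `x`: `pq x n = ⌊cq x n⌋`. -/
noncomputable def pq (x : ℝ) (n : ℕ) : ℤ := ⌊cq x n⌋

theorem pq_zero (x : ℝ) : pq x 0 = ⌊x⌋ := rfl

theorem cq_add (x : ℝ) (k n : ℕ) : cq x (k + n) = cq (cq x k) n := by
  induction n with
  | zero => rfl
  | succ n ih => exact congrArg (fun t => (Int.fract t)⁻¹) ih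

theorem pq_cq (x : ℝ) (k n : ℕ) : pq (cq x k) n = pq x (k + n) := by
  simp only [pq, cq_add]

theorem Irrational.cq {x : ℝ} (hx : Irrational x) (n : ℕ) : Irrational (cq x n) := by
  induction n with
  | zero => exact hx
  | succ n ih => exact (ih.sub_intCast ⌊_⌋).inv

theorem Irrational.fract_pos {x : ℝ} (hx : Irrational x) : 0 < Int.fract x :=
  Int.fract_pos.mpr (hx.ne_int ⌊x⌋)

theorem one_lt_cq {x : ℝ} (hx : Irrational x) (n : ℕ) : 1 < cq x (n + 1) :=
  one_lt_inv₀ (hx.cq n).fract_pos |>.mpr (Int.fract_lt_one _)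

theorem one_le_pq {x : ℝ} (hx : Irrational x) (n : ℕ) : 1 ≤ pq x (n + 1) :=
  Int.le_floor.mpr (by exact_mod_cast (one_lt_cq hx n).le)

theorem convergent_eq_of_pq_eq {x y : ℝ} (h : ∀ n, pq x n = pq y n) (n : ℕ) :
    x.convergent n = y.convergent n := by
  induction n generalizing x y with
  | zero => exact congrArg _ (h 0)
  | succ n ih =>
    have h' : ∀ k, pq (cq x 1) k = pq (cq y 1) k := fun k => by simp only [pq_cq, h]
    rw [Real.convergent_succ, Real.convergent_succ, show ⌊x⌋ = ⌊y⌋ from h 0]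
    exact congrArg (fun q => (⌊y⌋ : ℚ) + q⁻¹) (ih h')

theorem eq_of_pq_eq {x y : ℝ} (h : ∀ n, pq x n = pq y n) : x = y := by
  have hconv (z : ℝ) : Filter.Tendsto (fun n => (z.convergent n : ℝ)) Filter.atTop (nhds z) := by
    simpa only [funext (Real.convs_eq_convergent z)] using GenContFract.of_convergence z
  refine tendsto_nhds_unique (hconv x) ?_
  simpa only [convergent_eq_of_pq_eq h] using hconv y

theorem GenContFract.of_s_get?_eq {x : ℝ} (hx : Irrational x) (n : ℕ) :
    (GenContFract.of x).s.get? n = some ⟨1, (pq x (n + 1) : ℝ)⟩ := by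
  induction n generalizing x with
  | zero => exact GenContFract.of_s_head hx.fract_pos.ne'
  | succ n ih =>
    rw [GenContFract.of_s_succ, show (Int.fract x)⁻¹ = cq x 1 from rfl, ih (hx.cq 1), pq_cq,
      Nat.add_comm 1]

theorem Irrational.eq_of_add_div_eq_add_div {ξ : ℝ} (hξ : Irrational ξ) {p q r t : ℤ}
    (hq : q ≠ 0) (ht : t ≠ 0) (h : (p + ξ) / q = (r + ξ) / t) : p = r ∧ q = t := by
  rw [div_eq_div_iff (by exact_mod_cast hq) (by exact_mod_cast ht)] at h
  have hqt : q = t := by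
    by_contra hne
    refine (hξ.mul_intCast (sub_ne_zero.mpr (Ne.symm hne))).ne_int (r * q - p * t) ?_
    push_cast
    linarith
  subst hqt
  exact ⟨by exact_mod_cast add_right_cancel (mul_right_cancel₀ (by exact_mod_cast hq) h), rfl⟩

theorem Int.floor_div_eq_of_eq_mul_add {p s w : ℝ} (k : ℤ) (hw : 0 < w) (hs₀ : 0 ≤ s)
    (hs₁ : s < w) (hp : p = k * w + s) : ⌊p / w⌋ = k := by
  rw [Int.floor_eq_iff, le_div_iff₀ hw, div_lt_iff₀ hw]
  constructor <;> linarith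

theorem Nat.exists_eq_half_add_mul {T m : ℕ} (h₂ : T ∣ 2 * m) (h₁ : ¬ T ∣ m) :
    Even T ∧ ∃ k, m = T / 2 + k * T := by
  obtain ⟨c, hc⟩ := h₂
  rcases Nat.even_or_odd c with ⟨e, rfl⟩ | ⟨e, rfl⟩
  · exact absurd ⟨e, by linarith [show T * (e + e) = 2 * (T * e) by ring]⟩ h₁
  · have : 2 * m = 2 * (e * T) + T := by rw [hc]; ring
    exact ⟨⟨m - e * T, by omega⟩, e, by omega⟩

def IsCFPeriod (x : ℝ) (T : ℕ) : Prop := ∀ n, 1 ≤ n → pq x (n + T) = pq x n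

theorem IsCFPeriod.cq_add {x : ℝ} {T : ℕ} (hT : IsCFPeriod x T) {n : ℕ} (hn : 1 ≤ n) :
    cq x (n + T) = cq x n := by
  refine eq_of_pq_eq fun k => ?_
  rw [pq_cq, pq_cq, show n + T + k = n + k + T by omega]
  exact hT _ (by omega)

/-- `P (n+2) / Q (n+2)` is the `n`-th convergent of `[c 0; c 1, c 2, …]`. -/
structure IsContinuantPair (c P Q : ℕ → ℤ) : Prop where
  P_zero : P 0 = 0
  P_one : P 1 = 1
  Q_zero : Q 0 = 1
  Q_one : Q 1 = 0
  P_add_two : ∀ n, P (n + 2) = c n * P (n + 1) + P n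
  Q_add_two : ∀ n, Q (n + 2) = c n * Q (n + 1) + Q n

namespace IsContinuantPair

variable {c P Q : ℕ → ℤ}

theorem P_two (h : IsContinuantPair c P Q) : P 2 = c 0 := by
  simp [h.P_add_two, h.P_one, h.P_zero]

theorem Q_two (h : IsContinuantPair c P Q) : Q 2 = 1 := by
  simp [h.Q_add_two, h.Q_one, h.Q_zero]

theorem det (h : IsContinuantPair c P Q) (n : ℕ) :
    P (n + 1) * Q n - P n * Q (n + 1) = (-1) ^ n := by
  induction n with
  | zero => simp [h.P_one, h.P_zero, h.Q_one, h.Q_zero]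
  | succ n ih =>
    rw [h.P_add_two, h.Q_add_two, pow_succ]
    linear_combination -ih

theorem isCoprime (h : IsContinuantPair c P Q) (n : ℕ) : IsCoprime (P (n + 1)) (Q (n + 1)) :=
  ⟨(-1) ^ n * Q n, -((-1) ^ n * P n), by
    linear_combination (-1) ^ n * h.det n +
      (pow_mul_pow_eq_one n (by norm_num) : (-1 : ℤ) ^ n * (-1) ^ n = 1)⟩

theorem one_le_Q (h : IsContinuantPair c P Q) (hc : ∀ n, 1 ≤ c (n + 1)) (n : ℕ) :
    1 ≤ Q (n + 2) := by
  have key : ∀ n, 0 ≤ Q (n + 1) ∧ 1 ≤ Q (n + 2) := by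
    intro n
    induction n with
    | zero => simp [h.Q_one, h.Q_two]
    | succ n ih =>
      refine ⟨by linarith, ?_⟩
      rw [h.Q_add_two]
      nlinarith [hc n]
  exact (key n).2

theorem nums_dens {x : ℝ} (h : IsContinuantPair c P Q) (hx : Irrational x)
    (hc : ∀ n, c n = pq x n) (n : ℕ) :
    (GenContFract.of x).nums n = P (n + 2) ∧ (GenContFract.of x).dens n = Q (n + 2) := by
  have hs := GenContFract.of_s_get?_eq hx
  have key : ∀ n, ((GenContFract.of x).nums n = P (n + 2) ∧
      (GenContFract.of x).dens n = Q (n + 2)) ∧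
      ((GenContFract.of x).nums (n + 1) = P (n + 1 + 2) ∧
      (GenContFract.of x).dens (n + 1) = Q (n + 1 + 2)) := by
    intro n
    induction n with
    | zero =>
      rw [GenContFract.zeroth_num_eq_h, GenContFract.zeroth_den_eq_one,
        GenContFract.first_num_eq (hs 0), GenContFract.first_den_eq (hs 0),
        GenContFract.of_h_eq_floor, h.P_add_two (0 + 1), h.Q_add_two (0 + 1), h.P_two, h.Q_two,
        h.P_one, h.Q_one, hc, hc, pq_zero]
      push_cast
      exact ⟨⟨rfl, rfl⟩, by ring, by ring⟩
    | succ n ih =>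
      refine ⟨ih.2, ?_⟩
      rw [GenContFract.nums_recurrence (hs (n + 1)) ih.1.1 ih.2.1,
        GenContFract.dens_recurrence (hs (n + 1)) ih.1.2 ih.2.2, h.P_add_two (n + 2),
        h.Q_add_two (n + 2), hc]
      push_cast
      constructor <;> ring
  exact (key n).1

theorem convergent_eq {x : ℝ} (h : IsContinuantPair c P Q) (hx : Irrational x)
    (hc : ∀ n, c n = pq x n) (n : ℕ) :
    x.convergent n = (P (n + 2) / Q (n + 2) : ℚ) := by
  have := Real.convs_eq_convergent x n
  rw [GenContFract.conv_eq_num_div_den, (h.nums_dens hx hc n).1, (h.nums_dens hx hc n).2] at this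
  exact_mod_cast this.symm

theorem eq_of_div_eq_convergent {x : ℝ} (h : IsContinuantPair c P Q) (hx : Irrational x)
    (hc : ∀ n, c n = pq x n) {A B : ℤ} (hB : 0 < B) (hAB : IsCoprime A B) {n : ℕ}
    (hn : (A / B : ℚ) = x.convergent n) : A = P (n + 2) ∧ B = Q (n + 2) := by
  rw [h.convergent_eq hx hc] at hn
  have hQ := h.one_le_Q (fun k => hc (k + 1) ▸ one_le_pq hx k) n
  exact Rat.div_int_inj hB (by omega) (Int.isCoprime_iff_gcd_eq_one.mp hAB)
    (Int.isCoprime_iff_gcd_eq_one.mp (h.isCoprime (n + 1))) hn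

end IsContinuantPair

structure IsSqrtCF (d : ℕ) (aq aq' u v : ℕ → ℤ) : Prop where
  not_isSquare : ¬ IsSquare d
  aq_eq : ∀ n, aq n = pq √d n
  aq'_zero : aq' 0 = 2 * aq 0
  aq'_eq : ∀ n, 1 ≤ n → aq' n = aq n
  u_zero : u 0 = aq 0
  v_zero : v 0 = 1
  v_pos : ∀ n, 0 < v n
  u_succ : ∀ n, u (n + 1) = aq' n * v n - u n
  v_mul_v_succ : ∀ n, v n * v (n + 1) = d - u (n + 1) ^ 2

namespace IsSqrtCF

variable {d : ℕ} {aq aq' u v : ℕ → ℤ}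

theorem irrational (h : IsSqrtCF d aq aq' u v) : Irrational √d :=
  irrational_sqrt_natCast_iff.mpr h.not_isSquare

theorem aq_zero (h : IsSqrtCF d aq aq' u v) : aq 0 = ⌊√d⌋ := h.aq_eq 0

theorem u_one (h : IsSqrtCF d aq aq' u v) : u 1 = aq 0 := by
  rw [h.u_succ, h.v_zero, h.aq'_zero, h.u_zero]
  ring

theorem cast_v_pos (h : IsSqrtCF d aq aq' u v) (n : ℕ) : (0 : ℝ) < v n := by
  exact_mod_cast h.v_pos n

theorem conj_mul_eq (h : IsSqrtCF d aq aq' u v) (n : ℕ) :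
    (√d - u (n + 1)) * (u (n + 1) + √d) = v n * v (n + 1) := by
  have hv : ((v n * v (n + 1) : ℤ) : ℝ) = d - u (n + 1) ^ 2 := by
    exact_mod_cast h.v_mul_v_succ n
  push_cast at hv
  linear_combination Real.sq_sqrt (Nat.cast_nonneg (α := ℝ) d) - hv

theorem inv_conj_div (h : IsSqrtCF d aq aq' u v) (n : ℕ) :
    ((√d - u (n + 1)) / v n)⁻¹ = (u (n + 1) + √d) / v (n + 1) := by
  have hsub : √d - u (n + 1) ≠ 0 := sub_ne_zero.mpr (h.irrational.ne_int _)
  rw [inv_div, div_eq_div_iff hsub (h.cast_v_pos _).ne']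
  linear_combination -h.conj_mul_eq n

theorem fract_cq (h : IsSqrtCF d aq aq' u v) (n : ℕ) :
    Int.fract (cq √d n) = (√d - u (n + 1)) / v n := by
  induction n with
  | zero =>
    rw [h.u_one, h.aq_zero, h.v_zero, Int.cast_one, div_one]
    rfl
  | succ n ih =>
    have hcq : cq √d (n + 1) = (u (n + 1) + √d) / v (n + 1) := by rw [cq, ih, h.inv_conj_div]
    have hfl : ⌊cq √d (n + 1)⌋ = aq' (n + 1) := by
      rw [h.aq'_eq _ (Nat.le_add_left 1 n), h.aq_eq]
      rfl
    have hv := (h.cast_v_pos (n + 1)).ne'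
    rw [Int.fract, hfl, hcq, h.u_succ (n + 1)]
    push_cast
    field_simp
    ring

theorem cq_succ (h : IsSqrtCF d aq aq' u v) (n : ℕ) :
    cq √d (n + 1) = (u (n + 1) + √d) / v (n + 1) := by
  rw [cq, h.fract_cq, h.inv_conj_div]

theorem u_lt_sqrt (h : IsSqrtCF d aq aq' u v) (n : ℕ) : (u n : ℝ) < √d := by
  have key (n : ℕ) : (u (n + 1) : ℝ) < √d := by
    have := h.fract_cq n ▸ (h.irrational.cq n).fract_pos
    exact sub_pos.mp ((div_pos_iff_of_pos_right (h.cast_v_pos n)).mp this)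
  cases n with
  | zero => simpa only [h.u_zero, ← h.u_one] using key 0
  | succ n => exact key n

theorem sqrt_sub_u_succ_lt (h : IsSqrtCF d aq aq' u v) (n : ℕ) : √d - u (n + 1) < v n :=
  (div_lt_one (h.cast_v_pos n)).mp (h.fract_cq n ▸ Int.fract_lt_one _)

theorem one_le_aq' (h : IsSqrtCF d aq aq' u v) (n : ℕ) : 1 ≤ aq' n := by
  cases n with
  | zero =>
    have hd : (1 : ℝ) ≤ d := by
      exact_mod_cast Nat.one_le_iff_ne_zero.mpr fun h0 =>
        h.not_isSquare (by rw [h0]; exact IsSquare.zero)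
    have : 1 ≤ aq 0 := h.aq_zero ▸ Int.le_floor.mpr (by exact_mod_cast Real.one_le_sqrt.mpr hd)
    rw [h.aq'_zero]
    linarith
  | succ n =>
    rw [h.aq'_eq _ (Nat.le_add_left 1 n), h.aq_eq]
    exact one_le_pq h.irrational n

theorem sqrt_sub_u_lt (h : IsSqrtCF d aq aq' u v) (n : ℕ) : √d - u n < v n := by
  cases n with
  | zero =>
    rw [h.u_zero, h.aq_zero, h.v_zero, Int.cast_one]
    linarith [Int.lt_floor_add_one √d]
  | succ n =>
    have hconj := h.conj_mul_eq n
    have hsub : 0 < √d - u (n + 1) := sub_pos.mpr (h.u_lt_sqrt (n + 1))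
    have hv : (0 : ℝ) < v n := h.cast_v_pos n
    have hlt : (v n : ℝ) < u (n + 1) + √d := by
      have hu : (u (n + 1) : ℝ) = aq' n * v n - u n := by exact_mod_cast h.u_succ n
      have ha : (1 : ℝ) ≤ aq' n := by exact_mod_cast h.one_le_aq' n
      nlinarith [h.u_lt_sqrt n]
    by_contra! hc
    nlinarith [mul_le_mul_of_nonneg_left hc hv.le, mul_lt_mul_of_pos_right hlt hsub]

theorem aq'_eq_floor (h : IsSqrtCF d aq aq' u v) (n : ℕ) : aq' n = ⌊(u n + √d) / v n⌋ := by
  refine (Int.floor_div_eq_of_eq_mul_add _ (h.cast_v_pos n)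
    (sub_nonneg.mpr (h.u_lt_sqrt (n + 1)).le) (h.sqrt_sub_u_succ_lt n) ?_).symm
  have hu : (u (n + 1) : ℝ) = aq' n * v n - u n := by exact_mod_cast h.u_succ n
  linarith

theorem aq'_eq_floor_succ (h : IsSqrtCF d aq aq' u v) (n : ℕ) :
    aq' n = ⌊(u (n + 1) + √d) / v n⌋ := by
  refine (Int.floor_div_eq_of_eq_mul_add _ (h.cast_v_pos n) (sub_nonneg.mpr (h.u_lt_sqrt n).le)
    (h.sqrt_sub_u_lt n) ?_).symm
  have hu : (u (n + 1) : ℝ) = aq' n * v n - u n := by exact_mod_cast h.u_succ n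
  linarith

/-- Since `(u (n+1), v n)` determines `aq' n`, and hence `(u n, v (n-1))`, the recursion can be
run backwards: a coincidence of states at `i` and `j` propagates as a mirror image. -/
theorem reflect (h : IsSqrtCF d aq aq' u v) {i j : ℕ} (hu : u (i + 1) = u j) (hv : v i = v j) :
    ∀ l k, k + l = i → u (k + 1) = u (j + l) ∧ v k = v (j + l) := by
  intro l
  induction l with
  | zero => rintro k rfl; exact ⟨hu, hv⟩
  | succ l ih =>
    intro k hk
    obtain ⟨hu', hv'⟩ := ih (k + 1) (by omega)
    have ha : aq' (k + 1) = aq' (j + l) := by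
      rw [h.aq'_eq_floor_succ, h.aq'_eq_floor, hu', hv']
    have hu'' : u (k + 1) = u (j + l + 1) := by
      have e₁ := h.u_succ (k + 1)
      have e₂ := h.u_succ (j + l)
      rw [ha, hv', hu'] at e₁
      linarith
    refine ⟨hu'', mul_right_cancel₀ (h.v_pos (j + l)).ne' ?_⟩
    calc v k * v (j + l) = d - u (k + 1) ^ 2 := by rw [← hv', h.v_mul_v_succ]
      _ = v (j + (l + 1)) * v (j + l) := by rw [hu'', ← h.v_mul_v_succ, mul_comm]; rfl

theorem u_succ_eq_of_dvd (h : IsSqrtCF d aq aq' u v) {n : ℕ} (hdvd : v n ∣ 2 * u n) :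
    u (n + 1) = u n := by
  obtain ⟨k, hk⟩ := hdvd
  have ha : aq' n = k := by
    rw [h.aq'_eq_floor]
    refine Int.floor_div_eq_of_eq_mul_add k (h.cast_v_pos n) (sub_nonneg.mpr (h.u_lt_sqrt n).le)
      (h.sqrt_sub_u_lt n) ?_
    have hk' : (2 * u n : ℝ) = v n * k := by exact_mod_cast hk
    linarith
  rw [h.u_succ, ha]
  linarith

theorem v_two_mul_eq_one (h : IsSqrtCF d aq aq' u v) {n : ℕ} (hdvd : v n ∣ 2 * u n) :
    v (2 * n) = 1 := by
  rw [two_mul, ← (h.reflect (h.u_succ_eq_of_dvd hdvd) rfl n 0 (zero_add n)).2, h.v_zero]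

variable {T : ℕ}

theorem uv_add_period (h : IsSqrtCF d aq aq' u v) (hT : IsCFPeriod √d T) {n : ℕ} (hn : 1 ≤ n) :
    u (n + T) = u n ∧ v (n + T) = v n := by
  obtain ⟨m, rfl⟩ := Nat.exists_eq_add_of_le' hn
  have hcq := hT.cq_add hn
  rw [show m + 1 + T = m + T + 1 by omega] at hcq ⊢
  rw [h.cq_succ, h.cq_succ] at hcq
  exact h.irrational.eq_of_add_div_eq_add_div (h.v_pos _).ne' (h.v_pos _).ne' hcq

theorem uv_add_mul_period (h : IsSqrtCF d aq aq' u v) (hT : IsCFPeriod √d T) {n : ℕ}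
    (hn : 1 ≤ n) (k : ℕ) : u (n + k * T) = u n ∧ v (n + k * T) = v n := by
  induction k with
  | zero => simp
  | succ k ih =>
    rw [add_mul, one_mul, ← add_assoc, (h.uv_add_period hT (by omega)).1,
      (h.uv_add_period hT (by omega)).2]
    exact ih

theorem v_period (h : IsSqrtCF d aq aq' u v) (hT : IsCFPeriod √d T) : v T = 1 := by
  obtain ⟨hu, hv⟩ := h.uv_add_period hT le_rfl
  have e := h.v_mul_v_succ T
  rw [add_comm T 1, hu, hv] at e
  refine mul_right_cancel₀ (h.v_pos 1).ne' ?_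
  linear_combination e - h.v_mul_v_succ 0 + v 1 * h.v_zero

theorem v_eq_one_of_dvd (h : IsSqrtCF d aq aq' u v) (hT : IsCFPeriod √d T) {n : ℕ}
    (hn : 1 ≤ n) (hTn : T ∣ n) : v n = 1 := by
  obtain ⟨_ | k, rfl⟩ := hTn
  · simp at hn
  rw [mul_add_one, add_comm, mul_comm,
    (h.uv_add_mul_period hT (Nat.pos_of_mul_pos_right hn) k).2, h.v_period hT]

theorem period_le_of_v_eq_one (h : IsSqrtCF d aq aq' u v)
    (hmin : ∀ T', 1 ≤ T' → IsCFPeriod √d T' → T ≤ T') {n : ℕ} (hn : 1 ≤ n) (hv : v n = 1) :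
    T ≤ n := by
  obtain ⟨m, rfl⟩ := Nat.exists_eq_add_of_le' hn
  have hcq : cq √d (m + 1 + 1) = cq √d 1 := by
    rw [cq, h.cq_succ, hv, Int.cast_one, div_one, Int.fract_intCast_add]
    rfl
  refine hmin _ hn fun k hk => ?_
  obtain ⟨j, rfl⟩ := Nat.exists_eq_add_of_le' hk
  rw [show j + 1 + (m + 1) = m + 1 + 1 + j by omega, ← pq_cq, hcq, pq_cq, add_comm]

theorem period_dvd_of_v_eq_one (h : IsSqrtCF d aq aq' u v) (hT₁ : 1 ≤ T) (hT : IsCFPeriod √d T)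
    (hmin : ∀ T', 1 ≤ T' → IsCFPeriod √d T' → T ≤ T') {n : ℕ} (hv : v n = 1) : T ∣ n := by
  by_contra hTn
  have hr : 1 ≤ n % T := Nat.pos_of_ne_zero (mt Nat.dvd_of_mod_eq_zero hTn)
  have hvr : v (n % T) = 1 := by
    rw [← (h.uv_add_mul_period hT hr (n / T)).2, Nat.mod_add_div', hv]
  exact absurd (h.period_le_of_v_eq_one hmin hr hvr) (not_le.mpr (Nat.mod_lt n hT₁))

theorem exists_eq_half_period_add (h : IsSqrtCF d aq aq' u v) (hT₁ : 1 ≤ T)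
    (hT : IsCFPeriod √d T) (hmin : ∀ T', 1 ≤ T' → IsCFPeriod √d T' → T ≤ T') {m : ℕ}
    (hm : 1 ≤ m) (hdvd : v m ∣ 2 * u m) (hv : v m ≠ 1) : Even T ∧ ∃ k, m = T / 2 + k * T :=
  Nat.exists_eq_half_add_mul (h.period_dvd_of_v_eq_one hT₁ hT hmin (h.v_two_mul_eq_one hdvd))
    fun hTm => hv (h.v_eq_one_of_dvd hT hm hTm)

end IsSqrtCF

theorem abs_sub_div_lt_inv {s p q : ℝ} (hq : 1 ≤ q) (hp : p < q * s)
    (h : (q * s - p) * (2 * q - 1) < 1) : |s - p / q| < (q * (2 * q - 1))⁻¹ := by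
  have hq₀ : 0 < q := by linarith
  have h2q : 0 < 2 * q - 1 := by linarith
  rw [abs_of_pos (sub_pos.mpr ((div_lt_iff₀ hq₀).mpr (by linarith)))]
  calc s - p / q = (q * s - p) / q := by rw [sub_div, mul_div_cancel_left₀ _ hq₀.ne']
    _ = (q * s - p) * (2 * q - 1) / (q * (2 * q - 1)) := (mul_div_mul_right _ _ h2q.ne').symm
    _ < 1 / (q * (2 * q - 1)) := div_lt_div_of_pos_right h (by positivity)
    _ = (q * (2 * q - 1))⁻¹ := one_div _

/-- `(x √(ab) - b y) (x √(ab) + b y) = b`, with `b < √(ab)` and `x ≤ y`, puts `b y / x` within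
Legendre's bound. -/
theorem exists_convergent_eq_of_solution {a b x y : ℕ} (hb : 0 < b) (hba : b < a)
    (hxy : (a : ℤ) * x ^ 2 - b * y ^ 2 = 1) :
    ∃ n, ((b * y : ℤ) / x : ℚ) = (√((a * b : ℕ) : ℝ)).convergent n := by
  set s := √((a * b : ℕ) : ℝ) with hs_def
  have hs : s ^ 2 = a * b := by rw [hs_def, Real.sq_sqrt (Nat.cast_nonneg _), Nat.cast_mul]
  have hs₀ : 0 ≤ s := Real.sqrt_nonneg _
  have hxy' : (a : ℝ) * x ^ 2 - b * y ^ 2 = 1 := by exact_mod_cast hxy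
  have hba' : (b : ℝ) + 1 ≤ a := by exact_mod_cast hba
  have hb' : (0 : ℝ) < b := by exact_mod_cast hb
  have hy : (0 : ℝ) ≤ y := Nat.cast_nonneg y
  have hx : (1 : ℝ) ≤ x := by
    rcases Nat.eq_zero_or_pos x with h0 | h0
    · rw [h0, Nat.cast_zero] at hxy'
      nlinarith
    · exact_mod_cast h0
  have hbs : (b : ℝ) < s := by
    by_contra! h
    nlinarith [mul_self_le_mul_self hs₀ h]
  have hyx : (x : ℝ) ≤ y := by
    by_contra! h
    nlinarith [mul_self_lt_mul_self hy h, mul_le_mul_of_nonneg_right hba' (sq_nonneg (x : ℝ))]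
  have hconj : (x * s - b * y) * (x * s + b * y) = b := by linear_combination x ^ 2 * hs + b * hxy'
  have hlt : (b * y : ℝ) < x * s := by
    by_contra! h
    nlinarith [mul_nonpos_of_nonpos_of_nonneg (sub_nonpos.mpr h)
      (by positivity : 0 ≤ x * s + b * y)]
  refine Real.exists_rat_eq_convergent' ⟨⟨-y, a * x, by linear_combination hxy⟩, fun hx1 => ?_, ?_⟩
  · have hx1' : (x : ℝ) = 1 := by exact_mod_cast hx1
    push_cast
    nlinarith
  · push_cast
    refine abs_sub_div_lt_inv hx hlt ?_
    have hf : (b : ℝ) * (2 * x - 1) < x * s + b * y := by nlinarith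
    by_contra! h
    nlinarith [mul_le_mul_of_nonneg_right h (by positivity : (0 : ℝ) ≤ x * s + b * y)]

namespace IsSqrtCF

variable {d : ℕ} {aq aq' u v P Q : ℕ → ℤ}

theorem P_Q_succ_eq (h : IsSqrtCF d aq aq' u v) (hPQ : IsContinuantPair aq P Q) {n : ℕ}
    (hn : 1 ≤ n) : P (n + 1) = u n * Q (n + 1) + v n * Q n ∧
      d * Q (n + 1) = u n * P (n + 1) + v n * P n := by
  induction n, hn using Nat.le_induction with
  | base =>
    rw [hPQ.P_two, hPQ.Q_two, hPQ.P_one, hPQ.Q_one, h.u_one,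
      show v 1 = d - aq 0 ^ 2 by
        linear_combination h.v_mul_v_succ 0 - v 1 * h.v_zero - (u 1 + aq 0) * h.u_one]
    constructor <;> ring
  | succ n hn ih =>
    obtain ⟨hI, hII⟩ := ih
    have hu := h.u_succ n
    rw [h.aq'_eq n hn] at hu
    have hv := h.v_mul_v_succ n
    rw [hu] at hv ⊢
    rw [hPQ.P_add_two n, hPQ.Q_add_two n]
    constructor <;> refine mul_left_cancel₀ (h.v_pos n).ne' ?_
    · linear_combination (aq n * v n - u n) * hI - hII - Q (n + 1) * hv
    · linear_combination (aq n * v n - u n) * hII - d * hI - P (n + 1) * hv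

theorem P_sq_sub_d_mul_Q_sq (h : IsSqrtCF d aq aq' u v) (hPQ : IsContinuantPair aq P Q)
    (n : ℕ) : P (n + 1) ^ 2 - d * Q (n + 1) ^ 2 = (-1) ^ n * v n := by
  rcases Nat.eq_zero_or_pos n with rfl | hn
  · simp [hPQ.P_one, hPQ.Q_one, h.v_zero]
  · obtain ⟨hI, hII⟩ := h.P_Q_succ_eq hPQ hn
    linear_combination P (n + 1) * hI - Q (n + 1) * hII + v n * hPQ.det n

variable {a b : ℕ}

theorem exists_index_of_solution (h : IsSqrtCF d aq aq' u v) (hPQ : IsContinuantPair aq P Q)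
    (hdab : d = a * b) (hb : 0 < b) (hba : b < a) {x y : ℕ}
    (hxy : (a : ℤ) * x ^ 2 - b * y ^ 2 = 1) :
    ∃ m, 1 ≤ m ∧ Odd m ∧ v m = b ∧ (b : ℤ) ∣ u m ∧ b * y = P (m + 1) ∧ x = Q (m + 1) := by
  subst hdab
  obtain ⟨n, hn⟩ := exists_convergent_eq_of_solution hb hba hxy
  have hx : 0 < x := Nat.pos_of_ne_zero fun hx => by
    rw [hx, Nat.cast_zero] at hxy
    nlinarith [mul_nonneg (Nat.cast_nonneg b : (0 : ℤ) ≤ b) (sq_nonneg (y : ℤ))]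
  obtain ⟨hP, hQ⟩ := hPQ.eq_of_div_eq_convergent (A := b * y) (B := x) h.irrational h.aq_eq
    (by positivity) ⟨-y, a * x, by linear_combination hxy⟩ (by rw [Int.cast_natCast]; exact hn)
  have hsign := h.P_sq_sub_d_mul_Q_sq hPQ (n + 1)
  rw [← hP, ← hQ] at hsign
  push_cast at hsign
  rcases Nat.even_or_odd (n + 1) with he | ho
  · rw [he.neg_one_pow] at hsign
    have : v (n + 1) = -b := by linear_combination -hsign - b * hxy
    linarith [h.v_pos (n + 1)]
  have hv : v (n + 1) = b := by
    rw [ho.neg_one_pow] at hsign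
    linear_combination hsign + b * hxy
  refine ⟨n + 1, by omega, ho, hv, ?_, hP, hQ⟩
  have hdvd : (b : ℤ) ∣ u (n + 1) * x := by
    rw [hQ, show u (n + 1) * Q (n + 1 + 1) = P (n + 1 + 1) - v (n + 1) * Q (n + 1) by
      linear_combination -(h.P_Q_succ_eq hPQ (Nat.le_add_left 1 n)).1, ← hP, hv]
    exact dvd_sub (dvd_mul_right _ _) (dvd_mul_right _ _)
  exact IsCoprime.dvd_of_dvd_mul_right ⟨-y ^ 2, a * x, by linear_combination hxy⟩ hdvd

theorem solution_of_index (h : IsSqrtCF d aq aq' u v) (hPQ : IsContinuantPair aq P Q)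
    (hdab : d = a * b) (hb : 0 < b) {n : ℕ} (hn : 1 ≤ n) (hodd : Odd n) (hv : v n = b)
    (hu : (b : ℤ) ∣ u n) :
    (b : ℤ) ∣ P (n + 1) ∧ ∀ y : ℤ, b * y = P (n + 1) → a * Q (n + 1) ^ 2 - b * y ^ 2 = 1 := by
  refine ⟨?_, fun y hy => mul_left_cancel₀ (by exact_mod_cast hb.ne' : (b : ℤ) ≠ 0) ?_⟩
  · rw [(h.P_Q_succ_eq hPQ hn).1, hv]
    exact dvd_add (hu.mul_right _) (dvd_mul_right _ _)
  · have key := h.P_sq_sub_d_mul_Q_sq hPQ n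
    rw [hv, hodd.neg_one_pow, ← hy, hdab] at key
    push_cast at key
    linear_combination -key

variable {T : ℕ}

theorem half_period_of_solution (h : IsSqrtCF d aq aq' u v) (hPQ : IsContinuantPair aq P Q)
    (hT₁ : 1 ≤ T) (hT : IsCFPeriod √d T) (hmin : ∀ T', 1 ≤ T' → IsCFPeriod √d T' → T ≤ T')
    (hdab : d = a * b) (hb : 2 ≤ b) (hba : b < a) {x y : ℕ}
    (hxy : (a : ℤ) * x ^ 2 - b * y ^ 2 = 1) :
    (T % 4 = 2 ∧ v (T / 2) = b ∧ v (T / 2) ∣ u (T / 2)) ∧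
      ∃ l, (b : ℤ) * y = P (T / 2 + l * T + 1) ∧ (x : ℤ) = Q (T / 2 + l * T + 1) := by
  obtain ⟨m, hm, hodd, hvm, hum, hP, hQ⟩ :=
    h.exists_index_of_solution hPQ hdab (by omega) hba hxy
  obtain ⟨⟨t, rfl⟩, l, rfl⟩ := h.exists_eq_half_period_add hT₁ hT hmin hm
    (hvm ▸ Dvd.dvd.mul_left hum 2) (by rw [hvm]; exact_mod_cast (by omega : b ≠ 1))
  obtain ⟨hu, hv⟩ := h.uv_add_mul_period hT (by omega : 1 ≤ (t + t) / 2) l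
  refine ⟨⟨?_, hv ▸ hvm, ?_⟩, l, hP, hQ⟩
  · obtain ⟨r, hr⟩ := hodd
    have : l * (t + t) = 2 * (l * t) := by ring
    omega
  · rw [← hv, ← hu, hvm]
    exact hum

theorem solution_of_half_period (h : IsSqrtCF d aq aq' u v) (hPQ : IsContinuantPair aq P Q)
    (hT : IsCFPeriod √d T) (hdab : d = a * b) (hb : 0 < b)
    (hC : T % 4 = 2 ∧ v (T / 2) = b ∧ v (T / 2) ∣ u (T / 2)) (l : ℕ) :
    (b : ℤ) ∣ P (T / 2 + l * T + 1) ∧ ∀ y : ℤ, b * y = P (T / 2 + l * T + 1) →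
      a * Q (T / 2 + l * T + 1) ^ 2 - b * y ^ 2 = 1 := by
  obtain ⟨hmod, hvN, huN⟩ := hC
  obtain ⟨hu, hv⟩ := h.uv_add_mul_period hT (by omega : 1 ≤ T / 2) l
  have hodd : Odd (T / 2 + l * T) := by
    have : l * T = 2 * (l * (T / 2)) := by
      conv_lhs => rw [show T = 2 * (T / 2) by omega]
      ring
    exact ⟨T / 2 / 2 + l * (T / 2), by omega⟩
  exact h.solution_of_index hPQ hdab hb (by omega) hodd (hv.trans hvN)
    (by rw [hu, ← hvN]; exact huN)

end IsSqrtCF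

/-- As `P (n+2) = p_n` and `Q (n+2) = q_n`, the solution `(q_{N-1+ℓT}, p_{N-1+ℓT}/b)` with
`N = T/2` is `(Q (T/2 + ℓT + 1), P (T/2 + ℓT + 1) / b)`. -/
theorem stmt17_general (a b : ℕ) (hb2 : 2 ≤ b) (hba : b < a)
    (d : ℕ) (hdab : d = a * b) (hd : ¬ IsSquare d)
    (aq aq' : ℕ → ℤ) (haq : ∀ n, aq n = pq (Real.sqrt d) n)
    (haq'0 : aq' 0 = 2 * aq 0) (haq' : ∀ n, 1 ≤ n → aq' n = aq n)
    (u v : ℕ → ℤ) (hu0 : u 0 = aq 0) (hv0 : v 0 = 1)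
    (hvpos : ∀ n, 0 < v n)
    (hu : ∀ n, u (n + 1) = aq' n * v n - u n)
    (hv : ∀ n, v n * v (n + 1) = (d : ℤ) - (u (n + 1)) ^ 2)
    (P Q : ℕ → ℤ)
    (hP0 : P 0 = 0) (hP1 : P 1 = 1) (hQ0 : Q 0 = 1) (hQ1 : Q 1 = 0)
    (hP : ∀ n, P (n + 2) = aq n * P (n + 1) + P n)
    (hQ : ∀ n, Q (n + 2) = aq n * Q (n + 1) + Q n)
    (T : ℕ) (hT : 1 ≤ T)
    (hper : ∀ n, 1 ≤ n → pq (Real.sqrt d) (n + T) = pq (Real.sqrt d) n)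
    (hmin : ∀ T', 1 ≤ T' →
      (∀ n, 1 ≤ n → pq (Real.sqrt d) (n + T') = pq (Real.sqrt d) n) → T ≤ T') :
    ((∃ x y : ℕ, (a : ℤ) * (x : ℤ) ^ 2 - (b : ℤ) * (y : ℤ) ^ 2 = 1) ↔
      (T % 4 = 2 ∧ v (T / 2) = (b : ℤ) ∧ v (T / 2) ∣ u (T / 2))) ∧
    ((T % 4 = 2 ∧ v (T / 2) = (b : ℤ) ∧ v (T / 2) ∣ u (T / 2)) →
      ∀ x y : ℕ, ((a : ℤ) * (x : ℤ) ^ 2 - (b : ℤ) * (y : ℤ) ^ 2 = 1) ↔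
        (∃ l : ℕ, (b : ℤ) ∣ P (T / 2 + l * T + 1) ∧
          (x : ℤ) = Q (T / 2 + l * T + 1) ∧
          (b : ℤ) * (y : ℤ) = P (T / 2 + l * T + 1))) := by
  have h : IsSqrtCF d aq aq' u v := ⟨hd, haq, haq'0, haq', hu0, hv0, hvpos, hu, hv⟩
  have hPQ : IsContinuantPair aq P Q := ⟨hP0, hP1, hQ0, hQ1, hP, hQ⟩
  have hb : 0 < b := by omega
  refine ⟨⟨fun ⟨x, y, hxy⟩ => (h.half_period_of_solution hPQ hT hper hmin hdab hb2 hba hxy).1,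
    fun hC => ?_⟩, fun hC x y => ⟨fun hxy => ?_, ?_⟩⟩
  · obtain ⟨⟨y, hy⟩, hsol⟩ := h.solution_of_half_period hPQ hper hdab hb hC 0
    refine ⟨(Q (T / 2 + 0 * T + 1)).natAbs, y.natAbs, ?_⟩
    simpa only [Int.natCast_natAbs, sq_abs] using hsol y hy.symm
  · obtain ⟨-, l, hy, hx⟩ := h.half_period_of_solution hPQ hT hper hmin hdab hb2 hba hxy
    exact ⟨l, ⟨y, hy.symm⟩, hx, hy⟩
  · rintro ⟨l, -, hx, hy⟩
    rw [hx]
    exact (h.solution_of_half_period hPQ hper hdab hb hC l).2 y hy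

/-- Theorem 19, case `b < a`: solvability and solutions of
`a·x² - b·y² = 1`.  With `N = T/2`, solutions are exactly the pairs
`(q_{N-1+ℓT}, p_{N-1+ℓT}/b)`, where `P (n+2) = p_n`, `Q (n+2) = q_n`
(so `p_{N-1+ℓT} = P (N + ℓT + 1)`). -/
theorem stmt17 (a b : ℕ) (hb2 : 2 ≤ b) (hba : b < a) (hcop : Nat.Coprime a b)
    (d : ℕ) (hdab : d = a * b) (hd : ¬ IsSquare d)
    (aq aq' : ℕ → ℤ) (haq : ∀ n, aq n = pq (Real.sqrt d) n)
    (haq'0 : aq' 0 = 2 * aq 0) (haq' : ∀ n, 1 ≤ n → aq' n = aq n)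
    (u v : ℕ → ℤ) (hu0 : u 0 = aq 0) (hv0 : v 0 = 1)
    (hupos : ∀ n, 0 < u n) (hvpos : ∀ n, 0 < v n)
    (hu : ∀ n, u (n + 1) = aq' n * v n - u n)
    (hv : ∀ n, v n * v (n + 1) = (d : ℤ) - (u (n + 1)) ^ 2)
    (P Q : ℕ → ℤ)
    (hP0 : P 0 = 0) (hP1 : P 1 = 1) (hQ0 : Q 0 = 1) (hQ1 : Q 1 = 0)
    (hP : ∀ n, P (n + 2) = aq n * P (n + 1) + P n)
    (hQ : ∀ n, Q (n + 2) = aq n * Q (n + 1) + Q n)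
    (T : ℕ) (hT : 1 ≤ T)
    (hper : ∀ n, 1 ≤ n → pq (Real.sqrt d) (n + T) = pq (Real.sqrt d) n)
    (hmin : ∀ T', 1 ≤ T' →
      (∀ n, 1 ≤ n → pq (Real.sqrt d) (n + T') = pq (Real.sqrt d) n) → T ≤ T') :
    ((∃ x y : ℕ, (a : ℤ) * (x : ℤ) ^ 2 - (b : ℤ) * (y : ℤ) ^ 2 = 1) ↔
      (T % 4 = 2 ∧ v (T / 2) = (b : ℤ) ∧ v (T / 2) ∣ u (T / 2))) ∧
    ((T % 4 = 2 ∧ v (T / 2) = (b : ℤ) ∧ v (T / 2) ∣ u (T / 2)) →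
      ∀ x y : ℕ, ((a : ℤ) * (x : ℤ) ^ 2 - (b : ℤ) * (y : ℤ) ^ 2 = 1) ↔
        (∃ l : ℕ, (b : ℤ) ∣ P (T / 2 + l * T + 1) ∧
          (x : ℤ) = Q (T / 2 + l * T + 1) ∧
          (b : ℤ) * (y : ℤ) = P (T / 2 + l * T + 1))) :=
  stmt17_general a b hb2 hba d hdab hd aq aq' haq haq'0 haq' u v hu0 hv0 hvpos hu hv P Q hP0 hP1 hQ0
    hQ1 hP hQ T hT hper hmin
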